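/- arXiv:1908.08454 — 3 statements merged into one kernel-verified Lean document; each statement's English description precedes it below -/
import Mathlib

section
/- Let A ∈ Q^{t1×t2}, b ∈ Q^{t1}, p ∈ (1,∞], and set p* = p/(p-1) ∈ [1,∞). Consider Z = sup{‖r - s‖_{p*} : r, s ∈ R^{t2}, r ≥ 0, s ≥ 0, Ar = b, r + s = e} (with Z = -∞ if the feasible set is empty). Then Z = t2^{1/p*} if and only if there exists a binary vector r ∈ {0,1}^{t2} with Ar = b. -/
/-! Under `r, s ≥ 0`, `r + s = 1` every coordinate satisfies `|rᵢ - sᵢ| ≤ 1`, with equality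
exactly when `rᵢ ∈ {0, 1}`. Hence `∑ |rᵢ - sᵢ| ^ p* ≤ t2` on the feasible set, and the bound is
attained precisely at the feasible points with binary `r`, which can then be taken rational. -/

open Finset
open scoped ENNReal

/-- The dual exponent p* = p/(p-1), with p* = 1 when p = ∞. -/
noncomputable def dualExp (p : ℝ≥0∞) : ℝ :=
  if p = ⊤ then 1 else p.toReal / (p.toReal - 1)

lemma dualExp_pos {p : ℝ≥0∞} (hp : 1 < p) : 0 < dualExp p := by
  unfold dualExp
  split_ifs with htop
  · exact one_pos
  · have h1 : 1 < p.toReal := by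
      simpa using (ENNReal.toReal_lt_toReal ENNReal.one_ne_top htop).mpr hp
    exact div_pos (by linarith) (by linarith)

lemma abs_sub_le_one_of_add_eq_one {r s : ℝ} (hr : 0 ≤ r) (hs : 0 ≤ s) (h : r + s = 1) :
    |r - s| ≤ 1 :=
  abs_le.mpr ⟨by linarith, by linarith⟩

lemma abs_sub_eq_one_iff_of_add_eq_one {r s : ℝ} (h : r + s = 1) :
    |r - s| = 1 ↔ r = 0 ∨ r = 1 := by
  obtain rfl : s = 1 - r := by linarith
  rw [abs_eq zero_le_one]
  constructor <;> rintro (h | h) <;> [right; left; right; left] <;> linarith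

section RpowSum

variable {ι : Type*} [Fintype ι] {x : ι → ℝ} {q : ℝ}

lemma sum_abs_rpow_le_card (hq : 0 ≤ q) (hx : ∀ i, |x i| ≤ 1) :
    ∑ i, |x i| ^ q ≤ Fintype.card ι := by
  simpa using Finset.sum_le_sum fun i (_ : i ∈ univ) => Real.rpow_le_one (abs_nonneg _) (hx i) hq

lemma sum_abs_rpow_eq_card_iff (hq : 0 < q) (hx : ∀ i, |x i| ≤ 1) :
    ∑ i, |x i| ^ q = Fintype.card ι ↔ ∀ i, |x i| = 1 := by
  have hle : ∀ i ∈ univ, |x i| ^ q ≤ 1 := fun i _ =>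
    Real.rpow_le_one (abs_nonneg _) (hx i) hq.le
  have hcard : (Fintype.card ι : ℝ) = ∑ _i : ι, (1 : ℝ) := by simp
  rw [hcard, Finset.sum_eq_sum_iff_of_le hle]
  refine forall_congr' fun i => ?_
  rw [← Real.one_rpow q, Real.rpow_left_inj (abs_nonneg _) zero_le_one hq.ne', Real.one_rpow]
  simp

end RpowSum

lemma exists_rat_binary_of_real_binary {ι : Type*} {r : ι → ℝ} (hr : ∀ i, r i = 0 ∨ r i = 1) :
    ∃ r' : ι → ℚ, (∀ i, r' i = 0 ∨ r' i = 1) ∧ ∀ i, (r' i : ℝ) = r i := by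
  have h : ∀ i, ∃ c : ℚ, (c = 0 ∨ c = 1) ∧ (c : ℝ) = r i := fun i => by
    rcases hr i with h | h
    · exact ⟨0, Or.inl rfl, by simp [h]⟩
    · exact ⟨1, Or.inr rfl, by simp [h]⟩
  choose r' hr' using h
  exact ⟨r', fun i => (hr' i).1, fun i => (hr' i).2⟩

/-- For p ∈ (1,∞], the value t2^{1/p*} is attained as the maximum of ‖r - s‖_{p*}
over {r,s ≥ 0, Ar = b, r + s = e} if and only if there is a binary r with Ar = b. -/
theorem stmt11 {t1 t2 : ℕ} (A : Matrix (Fin t1) (Fin t2) ℚ) (b : Fin t1 → ℚ)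
    (p : ℝ≥0∞) (hp : 1 < p) :
    IsGreatest
      {y | ∃ r s : Fin t2 → ℝ, (∀ i, 0 ≤ r i) ∧ (∀ i, 0 ≤ s i) ∧
        (∀ i, ∑ j, (A i j : ℝ) * r j = (b i : ℝ)) ∧ (∀ i, r i + s i = 1) ∧
        y = (∑ i, |r i - s i| ^ dualExp p) ^ (1 / dualExp p)}
      ((t2 : ℝ) ^ (1 / dualExp p))
    ↔ ∃ r : Fin t2 → ℚ, (∀ i, r i = 0 ∨ r i = 1) ∧ ∀ i, ∑ j, A i j * r j = b i := by
  have hq := dualExp_pos hp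
  have hle {r s : Fin t2 → ℝ} (hr : ∀ i, 0 ≤ r i) (hs : ∀ i, 0 ≤ s i) (hrs : ∀ i, r i + s i = 1)
      (i : Fin t2) : |r i - s i| ≤ 1 :=
    abs_sub_le_one_of_add_eq_one (hr i) (hs i) (hrs i)
  constructor
  · rintro ⟨⟨r, s, hr, hs, hAr, hrs, hy⟩, -⟩
    have hsum : ∑ i, |r i - s i| ^ dualExp p = t2 := by
      rwa [eq_comm, Real.rpow_left_inj (Finset.sum_nonneg fun i _ => by positivity)
        (Nat.cast_nonneg _) (by positivity)] at hy
    have hone := (sum_abs_rpow_eq_card_iff hq (hle hr hs hrs)).mp (by simpa using hsum)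
    obtain ⟨r', hbin, hcast⟩ := exists_rat_binary_of_real_binary fun i =>
      (abs_sub_eq_one_iff_of_add_eq_one (hrs i)).mp (hone i)
    refine ⟨r', hbin, fun i => ?_⟩
    exact_mod_cast (show ∑ j, (A i j : ℝ) * r' j = b i by simpa only [hcast] using hAr i)
  · rintro ⟨r, hbin, hAr⟩
    have hbin' : ∀ i, (r i : ℝ) = 0 ∨ (r i : ℝ) = 1 := fun i => by exact_mod_cast hbin i
    refine ⟨⟨fun i => r i, fun i => 1 - r i, fun i => ?_, fun i => ?_,
      fun i => by simp only; exact_mod_cast hAr i, fun i => add_sub_cancel _ _, ?_⟩, ?_⟩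
    · rcases hbin' i with h | h <;> simp [h]
    · rcases hbin' i with h | h <;> simp [h]
    · have hone : ∀ i, |(r i : ℝ) - (1 - r i)| = 1 := fun i =>
        (abs_sub_eq_one_iff_of_add_eq_one (add_sub_cancel _ _)).mpr (hbin' i)
      have hsum := (sum_abs_rpow_eq_card_iff hq fun i => (hone i).le).mpr hone
      rw [Fintype.card_fin] at hsum
      rw [hsum]
    · rintro y ⟨r', s', hr', hs', -, hrs', rfl⟩
      refine Real.rpow_le_rpow (Finset.sum_nonneg fun i _ => by positivity) ?_ (by positivity)
      simpa using sum_abs_rpow_le_card hq.le (hle hr' hs' hrs')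
end

section
/- Let T ∈ R^{ℓ×m} with all entries of the same sign (all nonnegative or all nonpositive), π ∈ R_+^ℓ, h ∈ R^ℓ, ζ_T ∈ R^m, and θ ≥ 0. Then sup{(h - Tξ)ᵀπ : ξ ∈ R^m, ‖ξ - ζ_T‖_∞ ≤ θ} = (h - Tζ_T)ᵀπ + θ eᵀ|T|ᵀπ. -/
/-!
The objective is affine in `ξ`: it equals `hᵀπ - (Tᵀπ)ᵀξ`. Over the box `‖ξ - ζ‖_∞ ≤ θ` a linear
functional `cᵀξ` is maximised coordinatewise at `ξ = ζ + θ sign c`, with value `cᵀζ + θ ‖c‖₁`.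
For `c = -Tᵀπ` with `π ≥ 0` and `T` of constant sign, each `(Tᵀπ)_j` is a sum of terms of one sign,
so `‖Tᵀπ‖₁ = eᵀ|T|ᵀπ`.
-/

open Finset

lemma iSup_le_iff_of_finite_of_nonneg {ι : Type*} [Finite ι] {f : ι → ℝ} {a : ℝ} (ha : 0 ≤ a) :
    ⨆ i, f i ≤ a ↔ ∀ i, f i ≤ a :=
  ⟨fun h i => (le_ciSup (Set.finite_range f).bddAbove i).trans h, fun h => Real.iSup_le h ha⟩

lemma abs_sum_eq_sum_abs_of_nonneg_or_nonpos {ι : Type*} {s : Finset ι} {f : ι → ℝ}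
    (hf : (∀ i ∈ s, 0 ≤ f i) ∨ (∀ i ∈ s, f i ≤ 0)) :
    |∑ i ∈ s, f i| = ∑ i ∈ s, |f i| := by
  rcases hf with hf | hf
  · rw [abs_of_nonneg (sum_nonneg hf)]
    exact sum_congr rfl fun i hi => (abs_of_nonneg (hf i hi)).symm
  · rw [abs_of_nonpos (sum_nonpos hf), ← sum_neg_distrib]
    exact sum_congr rfl fun i hi => (abs_of_nonpos (hf i hi)).symm

section Box

variable {ι : Type*} [Fintype ι] (c ζ : ι → ℝ) {θ : ℝ}

lemma sum_mul_le_of_abs_sub_le {ξ : ι → ℝ} (hξ : ∀ j, |ξ j - ζ j| ≤ θ) :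
    ∑ j, c j * ξ j ≤ ∑ j, c j * ζ j + θ * ∑ j, |c j| := by
  rw [mul_sum, ← sum_add_distrib]
  refine sum_le_sum fun j _ => ?_
  calc c j * ξ j = c j * ζ j + c j * (ξ j - ζ j) := by ring
    _ ≤ c j * ζ j + |c j| * |ξ j - ζ j| := by
        grw [← abs_mul, ← le_abs_self]
    _ ≤ c j * ζ j + |c j| * θ := by grw [hξ j]
    _ = c j * ζ j + θ * |c j| := by ring

lemma exists_sum_mul_eq_of_abs_sub_le (hθ : 0 ≤ θ) :
    ∃ ξ : ι → ℝ, (∀ j, |ξ j - ζ j| ≤ θ) ∧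
      ∑ j, c j * ξ j = ∑ j, c j * ζ j + θ * ∑ j, |c j| := by
  refine ⟨fun j => ζ j + θ * SignType.sign (c j), fun j => ?_, ?_⟩
  · rw [add_sub_cancel_left, abs_mul, abs_of_nonneg hθ]
    exact mul_le_of_le_one_right hθ (by rcases SignType.sign (c j) with _ | _ | _ <;> simp)
  · rw [mul_sum, ← sum_add_distrib]
    refine sum_congr rfl fun j _ => ?_
    rw [← self_mul_sign (c j)]
    ring

end Box

/-- For sign-constant T, π ≥ 0, and θ ≥ 0:
sup{(h - Tξ)ᵀπ : ‖ξ - ζ_T‖_∞ ≤ θ} = (h - Tζ_T)ᵀπ + θ eᵀ|T|ᵀπ. -/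
theorem stmt15 {l m : ℕ} (T : Matrix (Fin l) (Fin m) ℝ)
    (hT : (∀ i j, 0 ≤ T i j) ∨ (∀ i j, T i j ≤ 0))
    (π : Fin l → ℝ) (hπ : ∀ i, 0 ≤ π i) (h : Fin l → ℝ) (ζT : Fin m → ℝ)
    (θ : ℝ) (hθ : 0 ≤ θ) :
    sSup {y | ∃ ξ : Fin m → ℝ, (⨆ j, |ξ j - ζT j|) ≤ θ ∧
        y = ∑ i, (h i - ∑ j, T i j * ξ j) * π i}
      = (∑ i, (h i - ∑ j, T i j * ζT j) * π i) + θ * ∑ j, ∑ i, |T i j| * π i := by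
  set c : Fin m → ℝ := fun j => -∑ i, T i j * π i
  have hobj : ∀ ξ : Fin m → ℝ,
      ∑ i, (h i - ∑ j, T i j * ξ j) * π i = ∑ i, h i * π i + ∑ j, c j * ξ j := by
    intro ξ
    simp only [c, sub_mul, sum_sub_distrib, sum_mul, neg_mul, sum_neg_distrib, ← sub_eq_add_neg]
    rw [sum_comm (f := fun i j => T i j * ξ j * π i)]
    simp only [mul_right_comm]
  have hc : ∑ j, |c j| = ∑ j, ∑ i, |T i j| * π i := by
    refine sum_congr rfl fun j _ => ?_
    rw [abs_neg, abs_sum_eq_sum_abs_of_nonneg_or_nonpos]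
    · simp only [abs_mul, abs_of_nonneg (hπ _)]
    · rcases hT with hT | hT
      exacts [.inl fun i _ => mul_nonneg (hT i j) (hπ i),
        .inr fun i _ => mul_nonpos_of_nonpos_of_nonneg (hT i j) (hπ i)]
  rw [← hc, hobj ζT, add_assoc]
  refine IsGreatest.csSup_eq ⟨?_, ?_⟩
  · obtain ⟨ξ, hξ, hsum⟩ := exists_sum_mul_eq_of_abs_sub_le c ζT hθ
    exact ⟨ξ, (iSup_le_iff_of_finite_of_nonneg hθ).2 hξ, by rw [hobj, hsum]⟩
  · rintro _ ⟨ξ, hξ, rfl⟩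
    rw [hobj]
    grw [sum_mul_le_of_abs_sub_le c ζT ((iSup_le_iff_of_finite_of_nonneg hθ).1 hξ)]
end

section
/- Let a_i ∈ R^m and d_i ∈ R for i ∈ [k], let ζ^1, …, ζ^N ∈ R^m be data points, θ ≥ 0, p ∈ [1,∞], and define z = (1/N) ∑_{j∈[N]} sup{max_{i∈[k]} (a_iᵀξ + d_i) : ‖ξ - ζ^j‖_p ≤ θ}. Then z equals the optimal value of: minimize (1/N) ∑_{j∈[N]} η_j subject to η_j ≥ a_iᵀζ^j + d_i + θ‖a_i‖_{p*} for all j ∈ [N], i ∈ [k], over η ∈ R^N. -/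
open Finset
open scoped ENNReal

/-- The p-norm on ℝ^m for p ∈ [1,∞], where p = ∞ gives the sup-norm. -/
noncomputable def pnorm {m : ℕ} (p : ℝ≥0∞) (x : Fin m → ℝ) : ℝ :=
  if p = ⊤ then ⨆ i, |x i| else (∑ i, |x i| ^ p.toReal) ^ (1 / p.toReal)

/-- The dual norm ‖a‖_{p*} = sup{aᵀs : ‖s‖_p ≤ 1}. -/
noncomputable def dualNorm {m : ℕ} (p : ℝ≥0∞) (a : Fin m → ℝ) : ℝ :=
  sSup {y | ∃ s : Fin m → ℝ, pnorm p s ≤ 1 ∧ y = ∑ i, a i * s i}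

/-!
Translating the ball, `ξ = ζ + θ s` with `‖s‖_p ≤ 1`, each affine piece has worst case
`aᵢᵀζ + dᵢ + θ‖aᵢ‖_{p*}` over the ball, and a supremum of a finite maximum is the maximum of
the suprema. The linear program decouples over `j`, and its optimum takes each `η_j` as small
as the constraints allow, namely `η_j = maxᵢ (aᵢᵀζ^j + dᵢ + θ‖aᵢ‖_{p*})`.
-/

section PNorm

variable {m : ℕ} {p : ℝ≥0∞}

lemma abs_le_pnorm (hp : p ≠ 0) (x : Fin m → ℝ) (t : Fin m) : |x t| ≤ pnorm p x := by
  unfold pnorm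
  split_ifs with hpt
  · exact le_ciSup (f := fun i => |x i|) (Set.finite_range _).bddAbove t
  · have hr : 0 < p.toReal := ENNReal.toReal_pos hp hpt
    calc |x t| = (|x t| ^ p.toReal) ^ (1 / p.toReal) := by
          rw [← Real.rpow_mul (abs_nonneg _), mul_one_div_cancel hr.ne', Real.rpow_one]
      _ ≤ (∑ i, |x i| ^ p.toReal) ^ (1 / p.toReal) := by
          gcongr
          exact single_le_sum (f := fun i => |x i| ^ p.toReal) (fun i _ => by positivity)
            (mem_univ t)

lemma pnorm_smul (hp : p ≠ 0) {c : ℝ} (hc : 0 ≤ c) (x : Fin m → ℝ) :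
    pnorm p (c • x) = c * pnorm p x := by
  unfold pnorm
  split_ifs with hpt
  · simp only [Pi.smul_apply, smul_eq_mul, abs_mul, abs_of_nonneg hc]
    exact (Real.mul_iSup_of_nonneg hc _).symm
  · have hr : p.toReal ≠ 0 := (ENNReal.toReal_pos hp hpt).ne'
    simp only [Pi.smul_apply, smul_eq_mul, abs_mul, abs_of_nonneg hc,
      Real.mul_rpow hc (abs_nonneg _), ← mul_sum]
    rw [Real.mul_rpow (by positivity) (by positivity), ← Real.rpow_mul hc,
      mul_one_div_cancel hr, Real.rpow_one]

lemma pnorm_zero (hp : p ≠ 0) : pnorm p (0 : Fin m → ℝ) = 0 := by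
  simpa using pnorm_smul hp le_rfl (0 : Fin m → ℝ)

end PNorm

section DualNorm

variable {m : ℕ} {p : ℝ≥0∞}

lemma bddAbove_dualNorm_set (hp : p ≠ 0) (a : Fin m → ℝ) :
    BddAbove {y | ∃ s : Fin m → ℝ, pnorm p s ≤ 1 ∧ y = ∑ i, a i * s i} := by
  refine ⟨∑ i, |a i|, ?_⟩
  rintro y ⟨s, hs, rfl⟩
  calc ∑ i, a i * s i ≤ ∑ i, |a i| * |s i| :=
        sum_le_sum fun i _ => (le_abs_self _).trans (abs_mul _ _).le
    _ ≤ ∑ i, |a i| := sum_le_sum fun i _ =>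
        mul_le_of_le_one_right (abs_nonneg _) ((abs_le_pnorm hp s i).trans hs)

lemma sum_mul_le_dualNorm (hp : p ≠ 0) (a : Fin m → ℝ) {s : Fin m → ℝ}
    (hs : pnorm p s ≤ 1) : ∑ i, a i * s i ≤ dualNorm p a :=
  le_csSup (bddAbove_dualNorm_set hp a) ⟨s, hs, rfl⟩

lemma sum_mul_le_mul_dualNorm (hp : p ≠ 0) (a : Fin m → ℝ) {s : Fin m → ℝ} {θ : ℝ}
    (hθ : 0 ≤ θ) (hs : pnorm p s ≤ θ) : ∑ i, a i * s i ≤ θ * dualNorm p a := by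
  rcases hθ.eq_or_lt with rfl | hθ
  · have hs0 : ∀ i, s i = 0 := fun i => abs_nonpos_iff.mp ((abs_le_pnorm hp s i).trans hs)
    simp [hs0]
  · have hunit : pnorm p (θ⁻¹ • s) ≤ 1 := by
      rw [pnorm_smul hp (inv_nonneg.2 hθ.le)]
      exact inv_mul_le_one_of_le₀ hs hθ.le
    have h := sum_mul_le_dualNorm hp a hunit
    simp only [Pi.smul_apply, smul_eq_mul, mul_left_comm _ θ⁻¹, ← mul_sum] at h
    exact (inv_mul_le_iff₀ hθ).mp h

lemma mul_dualNorm_le (hp : p ≠ 0) (a : Fin m → ℝ) {θ K : ℝ} (hθ : 0 ≤ θ)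
    (h : ∀ s : Fin m → ℝ, pnorm p s ≤ 1 → θ * ∑ i, a i * s i ≤ K) :
    θ * dualNorm p a ≤ K := by
  have h0 := h 0 (by simp [pnorm_zero hp])
  rcases hθ.eq_or_lt with rfl | hθ
  · simpa using h0
  · rw [← le_div_iff₀' hθ]
    refine csSup_le ⟨_, 0, by simp [pnorm_zero hp], rfl⟩ ?_
    rintro _ ⟨s, hs, rfl⟩
    exact (le_div_iff₀' hθ).2 (h s hs)

end DualNorm

theorem sSup_pnormBall_iSup_affine {m : ℕ} {p : ℝ≥0∞} {ι : Type*} [Finite ι] [Nonempty ι]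
    (hp : p ≠ 0) (a : ι → Fin m → ℝ) (d : ι → ℝ) (z : Fin m → ℝ) {θ : ℝ} (hθ : 0 ≤ θ) :
    sSup {y | ∃ ξ : Fin m → ℝ, pnorm p (ξ - z) ≤ θ ∧ y = ⨆ i, (∑ t, a i t * ξ t + d i)}
      = ⨆ i, (∑ t, a i t * z t + d i + θ * dualNorm p (a i)) := by
  refine IsLUB.csSup_eq ⟨?_, fun b hb => ciSup_le fun i => ?_⟩
    ⟨_, z, by simpa [pnorm_zero hp] using hθ, rfl⟩
  · rintro _ ⟨ξ, hξ, rfl⟩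
    refine ciSup_mono (Set.finite_range _).bddAbove fun i => ?_
    have h := sum_mul_le_mul_dualNorm hp (a i) hθ hξ
    simp only [Pi.sub_apply, mul_sub, sum_sub_distrib] at h
    linarith
  · have hshift : ∀ s : Fin m → ℝ, pnorm p s ≤ 1 →
        ∑ t, a i t * z t + d i + θ * ∑ t, a i t * s t ≤ b := by
      intro s hs
      have hball : pnorm p (z + θ • s - z) ≤ θ := by
        rw [add_sub_cancel_left, pnorm_smul hp hθ]
        exact mul_le_of_le_one_right hθ hs
      have h := (le_ciSup (Set.finite_range _).bddAbove i).trans (hb ⟨_, hball, rfl⟩)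
      simpa only [Pi.add_apply, Pi.smul_apply, smul_eq_mul, mul_add, sum_add_distrib,
        mul_left_comm _ θ, ← mul_sum, add_right_comm] using h
    have h := mul_dualNorm_le hp (a i) (K := b - (∑ t, a i t * z t + d i)) hθ
      fun s hs => by linarith [hshift s hs]
    linarith

theorem sInf_epigraph_eq {ι κ : Type*} [Fintype ι] [Finite κ] [Nonempty κ]
    (c : ι → κ → ℝ) {w : ℝ} (hw : 0 ≤ w) :
    sInf {v | ∃ η : ι → ℝ, (∀ j i, c j i ≤ η j) ∧ v = w * ∑ j, η j}
      = w * ∑ j, ⨆ i, c j i := by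
  refine IsLeast.csInf_eq ⟨⟨_, fun j i => le_ciSup (Set.finite_range _).bddAbove i, rfl⟩, ?_⟩
  rintro _ ⟨η, hη, rfl⟩
  exact mul_le_mul_of_nonneg_left (sum_le_sum fun j _ => ciSup_le (hη j)) hw

theorem stmt18_general {m k N : ℕ} (a : Fin (k + 1) → Fin m → ℝ)
    (d : Fin (k + 1) → ℝ) (ζ : Fin N → Fin m → ℝ) (θ : ℝ) (hθ : 0 ≤ θ)
    (p : ℝ≥0∞) (hp : 1 ≤ p) :
    (1 / (N : ℝ)) * ∑ j, sSup {y | ∃ ξ : Fin m → ℝ, pnorm p (ξ - ζ j) ≤ θ ∧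
        y = ⨆ i, (∑ t, a i t * ξ t + d i)}
      = sInf {v | ∃ η : Fin N → ℝ,
          (∀ j i, ∑ t, a i t * ζ j t + d i + θ * dualNorm p (a i) ≤ η j) ∧
          v = (1 / (N : ℝ)) * ∑ j, η j} := by
  have hp0 : p ≠ 0 := (zero_lt_one.trans_le hp).ne'
  rw [sInf_epigraph_eq (fun j i => ∑ t, a i t * ζ j t + d i + θ * dualNorm p (a i))
    (by positivity)]
  simp only [sSup_pnormBall_iSup_affine hp0 a d _ hθ]

/-- The worst-case expected piecewise-affine cost under an ∞-Wasserstein ball around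
the empirical distribution equals the optimal value of the epigraph linear program. -/
theorem stmt18 {m k N : ℕ} (hN : 0 < N) (a : Fin (k + 1) → Fin m → ℝ)
    (d : Fin (k + 1) → ℝ) (ζ : Fin N → Fin m → ℝ) (θ : ℝ) (hθ : 0 ≤ θ)
    (p : ℝ≥0∞) (hp : 1 ≤ p) :
    (1 / (N : ℝ)) * ∑ j, sSup {y | ∃ ξ : Fin m → ℝ, pnorm p (ξ - ζ j) ≤ θ ∧
        y = ⨆ i, (∑ t, a i t * ξ t + d i)}
      = sInf {v | ∃ η : Fin N → ℝ,
          (∀ j i, ∑ t, a i t * ζ j t + d i + θ * dualNorm p (a i) ≤ η j) ∧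
          v = (1 / (N : ℝ)) * ∑ j, η j} :=
  stmt18_general a d ζ θ hθ p hp
end
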